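/- Let π̃ be a probability measure invariant under a Markov kernel α on a measurable space S, and suppose R([μ]_1⊗p ‖ [μ]_1⊗α) < ∞ where p is a kernel leaving the probability measure [μ]_1 invariant. If there exist N and c > 0 with α^{(N)}(x,·) ≤ cπ̃ for all x, then [μ]_1 ≪ π̃. -/

import Mathlib

open MeasureTheory ProbabilityTheory
open scoped Classical
open scoped ENNReal

/-- Relative entropy (Kullback–Leibler divergence) with values in `ℝ≥0∞`. -/
noncomputable def relEnt {V : Type*} [MeasurableSpace V] (γ θ : Measure V) : ℝ≥0∞ :=
  if γ ≪ θ ∧ Integrable (fun x => Real.log (γ.rnDeriv θ x).toReal) γ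
  then ENNReal.ofReal (∫ x, Real.log (γ.rnDeriv θ x).toReal ∂γ) else ⊤

/-- `N`-step transition kernel `α^{(N)}`. -/
noncomputable def iterKernel {S : Type*} [MeasurableSpace S]
    (α : Kernel S S) : ℕ → Kernel S S
  | 0 => Kernel.id
  | (n + 1) => (iterKernel α n).comp α

/-
Finite relative entropy gives `ν ⊗ₘ p ≪ ν ⊗ₘ α` for `ν = [μ]₁`; taking second
marginals and using `p ∘ₘ ν = ν` yields `ν ≪ α ∘ₘ ν`, and iterating, `ν ≪ α^{(N)} ∘ₘ ν`.
Finally the minorisation `α^{(N)}(x, ·) ≤ c π̃` forces `α^{(N)} ∘ₘ ν ≪ π̃`.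
-/

lemma absolutelyContinuous_of_relEnt_lt_top {V : Type*} [MeasurableSpace V] {γ θ : Measure V}
    (h : relEnt γ θ < ⊤) : γ ≪ θ := by
  by_contra hγθ
  rw [relEnt, if_neg fun h ↦ hγθ h.1] at h
  exact lt_irrefl _ h

namespace MeasureTheory.Measure

variable {α β : Type*} {mα : MeasurableSpace α} {mβ : MeasurableSpace β}

lemma AbsolutelyContinuous.comp_of_compProd {ν : Measure α} [SFinite ν]
    {κ η : Kernel α β} [IsSFiniteKernel κ] [IsSFiniteKernel η] (h : ν ⊗ₘ κ ≪ ν ⊗ₘ η) :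
    κ ∘ₘ ν ≪ η ∘ₘ ν := by
  rw [← snd_compProd, ← snd_compProd]
  exact h.map measurable_snd

lemma comp_absolutelyContinuous {μ : Measure α} {κ : Kernel α β} {π : Measure β}
    (h : ∀ᵐ a ∂μ, κ a ≪ π) : κ ∘ₘ μ ≪ π := by
  have h_const : κ ∘ₘ μ ≪ Kernel.const α π ∘ₘ μ := AbsolutelyContinuous.comp_left μ h
  rw [const_comp] at h_const
  exact h_const.trans smul_absolutelyContinuous

end MeasureTheory.Measure

lemma absolutelyContinuous_iterKernel_comp {S : Type*} [MeasurableSpace S] {ν : Measure S}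
    {α : Kernel S S} (h : ν ≪ α ∘ₘ ν) (n : ℕ) : ν ≪ iterKernel α n ∘ₘ ν := by
  induction n with
  | zero => rw [iterKernel, Measure.id_comp]
  | succ n ih =>
    rw [iterKernel, ← Measure.comp_assoc]
    exact ih.trans (h.comp_right _)

theorem stmt15_general {S : Type*} [MeasurableSpace S]
    (μ : Measure (S × S)) [IsProbabilityMeasure μ] (hμ : μ.fst = μ.snd)
    (p α : Kernel S S) [IsMarkovKernel p] [IsMarkovKernel α]
    (hp : μ = μ.fst ⊗ₘ p)
    (πt : Measure S)
    (N : ℕ) (c : ℝ)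
    (hdom : ∀ x, iterKernel α N x ≤ (ENNReal.ofReal c) • πt)
    (hfin : relEnt (μ.fst ⊗ₘ p) (μ.fst ⊗ₘ α) < ⊤) :
    μ.fst ≪ πt := by
  have hstat : p ∘ₘ μ.fst = μ.fst := by
    rw [← Measure.snd_compProd, ← hp, ← hμ]
  have hstep : μ.fst ≪ α ∘ₘ μ.fst := by
    simpa only [hstat] using (absolutelyContinuous_of_relEnt_lt_top hfin).comp_of_compProd
  refine (absolutelyContinuous_iterKernel_comp hstep N).trans ?_
  exact Measure.comp_absolutelyContinuous <| .of_forall fun x ↦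
    (Measure.absolutelyContinuous_of_le (hdom x)).trans Measure.smul_absolutelyContinuous

/-- if `π̃` is invariant under `α`, `R([μ]₁ ⊗ p ‖ [μ]₁ ⊗ α) < ∞` where
`p` leaves `[μ]₁` invariant (i.e. `μ = [μ]₁ ⊗ p` has equal marginals), and
`α^{(N)}(x,·) ≤ c·π̃` for all `x`, then `[μ]₁ ≪ π̃`. -/
theorem stmt15 {S : Type*} [MeasurableSpace S] [StandardBorelSpace S]
    (μ : Measure (S × S)) [IsProbabilityMeasure μ] (hμ : μ.fst = μ.snd)
    (p α : Kernel S S) [IsMarkovKernel p] [IsMarkovKernel α]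
    (hp : μ = μ.fst ⊗ₘ p)
    (πt : Measure S) [IsProbabilityMeasure πt]
    (hinv : πt.bind (fun x => α x) = πt)
    (N : ℕ) (c : ℝ) (hc : 0 < c)
    (hdom : ∀ x, iterKernel α N x ≤ (ENNReal.ofReal c) • πt)
    (hfin : relEnt (μ.fst ⊗ₘ p) (μ.fst ⊗ₘ α) < ⊤) :
    μ.fst ≪ πt :=
  stmt15_general μ hμ p α hp πt N c hdom hfin
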